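/- Let R be a commutative ring with unity whose characteristic equals n, where n is a prime number, let G = ⟨x | x^n = 1⟩ be a cyclic group of order n, and let σ, τ be the R-algebra endomorphisms of RG with σ(x) = x^u and τ(x) = x^{u+v}, where u, v ∈ {0, 1, …, n−1}. Let D : RG → RG be an R-linear map with D(1) = 0 satisfying D(x^k) = (Σ_{i+j=k−1, i,j ≥ 0} σ(x)^i τ(x)^j)·D(x) for every k ∈ {1, 2, …, n−1}, and suppose that D(x) is a unit of the ring RG. Then D is a (σ,τ)-derivation of RG if and only if σ = τ (equivalently, v = 0). -/

import Mathlib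

/-- The generator `x` of the cyclic group of order `n`, viewed inside the group ring
`R[Multiplicative (ZMod n)]`. -/
noncomputable def xgen (R : Type*) [CommRing R] (n : ℕ) :
    MonoidAlgebra R (Multiplicative (ZMod n)) :=
  MonoidAlgebra.of R (Multiplicative (ZMod n)) (Multiplicative.ofAdd (1 : ZMod n))

/-! Iterating the twisted Leibniz rule gives `D (x ^ (k + 1)) = (∑_{i+j=k} σ(x)^i τ(x)^j) D(x)`.
At `k + 1 = n`, where `x ^ n = 1` and `D 1 = 0`, the unit `D x` cancels and
`∑_{i+j=n-1} x^{ui} x^{(u+v)j} = x^{u(n-1)} ∑_{j<n} x^{vj}` must vanish; for `v` prime to `n`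
only `j = 0` contributes to the coefficient of `1`, so it does not.
Conversely, if `σ = τ = s` the relations read `s D(x^k) = k s^k D(x)` for `k < n`; in
characteristic `n` both sides only depend on `k mod n`, and this power rule is the Leibniz rule on
the powers of `x`, which span `RG`. -/

open Finset

section Leibniz

variable {A : Type*} [CommSemiring A]

theorem sum_antidiagonal_succ_pow_mul_pow (a b : A) (k : ℕ) :
    ∑ p ∈ antidiagonal (k + 1), a ^ p.1 * b ^ p.2 =
      (∑ p ∈ antidiagonal k, a ^ p.1 * b ^ p.2) * b + a ^ (k + 1) := by
  rw [Nat.sum_antidiagonal_succ', sum_mul, add_comm]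
  simp [pow_succ, mul_assoc]

theorem sum_antidiagonal_pow_mul_pow_self (a : A) (k : ℕ) :
    ∑ p ∈ antidiagonal k, a ^ p.1 * a ^ p.2 = (k + 1) * a ^ k := by
  rw [sum_congr rfl fun p hp => by rw [← pow_add, mem_antidiagonal.mp hp], sum_const,
    Nat.card_antidiagonal, nsmul_eq_mul, Nat.cast_succ]

theorem sum_antidiagonal_pow_mul_mul_pow (a c : A) (k : ℕ) :
    ∑ p ∈ antidiagonal k, a ^ p.1 * (a * c) ^ p.2 = a ^ k * ∑ j ∈ range (k + 1), c ^ j := by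
  rw [mul_sum, ← Nat.sum_antidiagonal_swap, Nat.sum_antidiagonal_eq_sum_range_succ_mk]
  refine sum_congr rfl fun j hj => ?_
  rw [mem_range] at hj
  simp only [Prod.swap, mul_pow, ← mul_assoc, ← pow_add]
  rw [Nat.sub_add_cancel (by omega)]

theorem apply_pow_succ_of_leibniz {F : Type*} [FunLike F A A] [MonoidHomClass F A A] {σ τ : F}
    {D : A → A} (hD : ∀ a b, D (a * b) = D a * τ b + σ a * D b) (a : A) (k : ℕ) :
    D (a ^ (k + 1)) = (∑ p ∈ antidiagonal k, σ a ^ p.1 * τ a ^ p.2) * D a := by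
  induction k with
  | zero => simp
  | succ k ih =>
    rw [pow_succ, hD, ih, map_pow, sum_antidiagonal_succ_pow_mul_pow]
    ring

theorem leibniz_pow_of_mul_apply_pow {D : A → A} {x s : A} (hs : IsUnit s)
    (hD : ∀ k : ℕ, s * D (x ^ k) = k * s ^ k * D x) (i j : ℕ) :
    D (x ^ i * x ^ j) = D (x ^ i) * s ^ j + s ^ i * D (x ^ j) := by
  apply hs.mul_left_cancel
  calc s * D (x ^ i * x ^ j) = (i + j) * s ^ (i + j) * D x := by
        rw [← pow_add, hD, Nat.cast_add]
    _ = s * D (x ^ i) * s ^ j + s ^ i * (s * D (x ^ j)) := by rw [hD, hD]; ring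
    _ = s * (D (x ^ i) * s ^ j + s ^ i * D (x ^ j)) := by ring

theorem mul_apply_pow_of_forall_lt {n : ℕ} (hn0 : n ≠ 0) (hn : (n : A) = 0) {x s : A}
    (hx : x ^ n = 1) (hs : s ^ n = 1) {D : A → A}
    (hD : ∀ k < n, s * D (x ^ k) = k * s ^ k * D x) (k : ℕ) :
    s * D (x ^ k) = k * s ^ k * D x := by
  have hk : (k : A) = (k % n : ℕ) := by
    conv_lhs => rw [← Nat.mod_add_div k n]
    rw [Nat.cast_add, Nat.cast_mul, hn, zero_mul, add_zero]
  rw [pow_eq_pow_mod k hx, pow_eq_pow_mod k hs, hk]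
  exact hD _ (Nat.mod_lt _ (Nat.pos_of_ne_zero hn0))

end Leibniz

theorem leibniz_of_span_eq_top {R A : Type*} [CommSemiring R] [Semiring A] [Algebra R A]
    (D σ τ : A →ₗ[R] A) {s : Set A} (hs : Submodule.span R s = ⊤)
    (h : ∀ a ∈ s, ∀ b ∈ s, D (a * b) = D a * τ b + σ a * D b) (a b : A) :
    D (a * b) = D a * τ b + σ a * D b := by
  have ha : a ∈ Submodule.span R s := hs ▸ Submodule.mem_top
  have hb : b ∈ Submodule.span R s := hs ▸ Submodule.mem_top
  induction ha using Submodule.span_induction with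
  | mem a ha =>
    induction hb using Submodule.span_induction with
    | mem b hb => exact h a ha b hb
    | zero => simp
    | add b c _ _ hb hc => simp only [mul_add, map_add, hb, hc]; abel
    | smul r b _ hb => simp only [mul_smul_comm, map_smul, hb, smul_add]
  | zero => simp
  | add a c _ _ ha hc => simp only [add_mul, map_add, ha, hc]; abel
  | smul r a _ ha => simp only [smul_mul_assoc, map_smul, ha, smul_add]

section GroupRing

variable (R : Type*) [CommRing R] (n : ℕ)

theorem xgen_pow (k : ℕ) :
    xgen R n ^ k = MonoidAlgebra.of R _ (Multiplicative.ofAdd (k : ZMod n)) := by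
  rw [xgen, ← map_pow, ← ofAdd_nsmul, nsmul_one]

theorem xgen_pow_self : xgen R n ^ n = 1 := by
  rw [xgen_pow, ZMod.natCast_self, ofAdd_zero, map_one]

theorem span_range_xgen_pow [NeZero n] :
    Submodule.span R (Set.range (xgen R n ^ ·)) = ⊤ := by
  refine Submodule.eq_top_iff'.2 fun f => ?_
  induction f using MonoidAlgebra.induction_on with
  | of g =>
    refine Submodule.subset_span ⟨(Multiplicative.toAdd g).val, ?_⟩
    simp only [xgen_pow, ZMod.natCast_zmod_val, ofAdd_toAdd]
  | add f g hf hg => exact add_mem hf hg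
  | smul r f hf => exact Submodule.smul_mem _ r hf

theorem sum_range_xgen_pow_pow_ne_zero [Nontrivial R] [NeZero n] {v : ℕ} (hv : n.Coprime v) :
    ∑ j ∈ range n, (xgen R n ^ v) ^ j ≠ 0 := by
  intro h
  simp_rw [← pow_mul, xgen_pow] at h
  have h1 := congrArg (fun f => MonoidAlgebra.coeff f 1) h
  simp only [MonoidAlgebra.coeff_sum, Finsupp.coe_finsetSum, Finset.sum_apply] at h1
  rw [sum_eq_single 0] at h1
  · simp at h1
  · intro j hj hj0
    have hvj : ((v * j : ℕ) : ZMod n) ≠ 0 := by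
      rw [Ne, ZMod.natCast_eq_zero_iff]
      exact fun hdvd => Nat.not_dvd_of_pos_of_lt (Nat.pos_of_ne_zero hj0) (mem_range.1 hj)
        (hv.dvd_of_dvd_mul_left hdvd)
    simp only [MonoidAlgebra.of_apply, MonoidAlgebra.coeff_single]
    exact Finsupp.single_eq_of_ne fun h' => hvj (by simpa using h'.symm)
  · simp [NeZero.ne n]

theorem sum_antidiagonal_xgen_pow_mul_pow_ne_zero [Nontrivial R] [NeZero n] (u : ℕ) {v : ℕ}
    (hv : n.Coprime v) :
    ∑ p ∈ antidiagonal (n - 1), (xgen R n ^ u) ^ p.1 * (xgen R n ^ (u + v)) ^ p.2 ≠ 0 := by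
  have hxu : IsUnit (xgen R n ^ u) :=
    (IsUnit.of_pow_eq_one (xgen_pow_self R n) (NeZero.ne n)).pow u
  rw [pow_add, sum_antidiagonal_pow_mul_mul_pow, Ne, (hxu.pow _).mul_right_eq_zero,
    Nat.sub_add_cancel NeZero.one_le]
  exact sum_range_xgen_pow_pow_ne_zero R n hv

end GroupRing

theorem stmt14_general {R : Type*} [CommRing R] (n u v : ℕ)
    (hchar : ringChar R = n) (hp : n.Prime)
    (hv : v < n)
    (σ τ : MonoidAlgebra R (Multiplicative (ZMod n)) →ₐ[R] MonoidAlgebra R (Multiplicative (ZMod n)))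
    (hσ : σ (xgen R n) = xgen R n ^ u) (hτ : τ (xgen R n) = xgen R n ^ (u + v))
    (D : MonoidAlgebra R (Multiplicative (ZMod n)) →ₗ[R] MonoidAlgebra R (Multiplicative (ZMod n)))
    (hD1 : D 1 = 0)
    (hrel : ∀ k : ℕ, 1 ≤ k → k ≤ n - 1 →
      D (xgen R n ^ k) =
        (∑ p ∈ Finset.HasAntidiagonal.antidiagonal (k - 1), σ (xgen R n) ^ p.1 * τ (xgen R n) ^ p.2) *
          D (xgen R n))
    (hunit : IsUnit (D (xgen R n))) :
    (∀ a b, D (a * b) = D a * τ b + σ a * D b) ↔ v = 0 := by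
  have : NeZero n := ⟨hp.ne_zero⟩
  have hσn : σ (xgen R n) ^ n = 1 := by rw [← map_pow, xgen_pow_self, map_one]
  constructor
  · intro hleib
    by_contra hv0
    have : CharP R n := hchar ▸ ringChar.charP R
    have : Nontrivial R := CharP.nontrivial_of_char_ne_one hp.ne_one
    refine sum_antidiagonal_xgen_pow_mul_pow_ne_zero R n u
      (hp.coprime_iff_not_dvd.2 (Nat.not_dvd_of_pos_of_lt (Nat.pos_of_ne_zero hv0) hv)) ?_
    rw [← hσ, ← hτ, ← hunit.mul_left_eq_zero, ← apply_pow_succ_of_leibniz hleib,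
      Nat.sub_add_cancel hp.one_le, xgen_pow_self, hD1]
  · rintro rfl
    rw [add_zero, ← hσ] at hτ
    have hn : (n : MonoidAlgebra R (Multiplicative (ZMod n))) = 0 := by
      rw [← map_natCast (algebraMap R _), ← hchar, ringChar.Nat.cast_ringChar, map_zero]
    have hpow := mul_apply_pow_of_forall_lt (s := σ (xgen R n)) (D := D) hp.ne_zero hn
      (xgen_pow_self R n) hσn fun k hk => by
        cases k with
        | zero => simp [hD1]
        | succ k =>
          rw [hrel (k + 1) (by omega) (by omega), hτ, Nat.add_sub_cancel,
            sum_antidiagonal_pow_mul_pow_self, Nat.cast_succ]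
          ring
    refine leibniz_of_span_eq_top D σ.toLinearMap τ.toLinearMap (span_range_xgen_pow R n) ?_
    rintro _ ⟨i, rfl⟩ _ ⟨j, rfl⟩
    simp only [AlgHom.toLinearMap_apply, map_pow, hτ]
    exact leibniz_pow_of_mul_apply_pow (.of_pow_eq_one hσn hp.ne_zero) hpow i j

/-- Suppose `char R = n` is prime, `σ x = x^u`, `τ x = x^{u+v}`
(`u, v < n`), and `D` is `R`-linear with `D 1 = 0`, satisfies the relations (2.1),
and `D x` is a unit of `RG`. Then `D` is a `(σ,τ)`-derivation iff `σ = τ`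
(equivalently, `v = 0`). -/
theorem stmt14 {R : Type*} [CommRing R] (n u v : ℕ) [NeZero n]
    (hchar : ringChar R = n) (hp : n.Prime)
    (hu : u < n) (hv : v < n)
    (σ τ : MonoidAlgebra R (Multiplicative (ZMod n)) →ₐ[R] MonoidAlgebra R (Multiplicative (ZMod n)))
    (hσ : σ (xgen R n) = xgen R n ^ u) (hτ : τ (xgen R n) = xgen R n ^ (u + v))
    (D : MonoidAlgebra R (Multiplicative (ZMod n)) →ₗ[R] MonoidAlgebra R (Multiplicative (ZMod n)))
    (hD1 : D 1 = 0)
    (hrel : ∀ k : ℕ, 1 ≤ k → k ≤ n - 1 →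
      D (xgen R n ^ k) =
        (∑ p ∈ Finset.HasAntidiagonal.antidiagonal (k - 1), σ (xgen R n) ^ p.1 * τ (xgen R n) ^ p.2) *
          D (xgen R n))
    (hunit : IsUnit (D (xgen R n))) :
    (∀ a b, D (a * b) = D a * τ b + σ a * D b) ↔ v = 0 :=
  stmt14_general n u v hchar hp hv σ τ hσ hτ D hD1 hrel hunit
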